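/- (Equilibrium growth rates of the stochastic Ricker equation.) Let k > 0, θ > 0, r > 0. Let X be a real random variable distributed as Gamma(k, θ), and let ε be a square-integrable real random variable independent of X with E[ε] = 1 and Var(ε) = v. Set Y = X · e^{r(1 − X)} · ε. If E[Y] = E[X] = kθ and Var(Y) = Var(X) = kθ², then 2·e^{r/(k + 1)} − ((1 + v)·e^{2r})^{1/(k + 2)} = 1. -/

import Mathlib

open MeasureTheory ProbabilityTheory Real

/-! Under `Gamma(k, θ)` the factor `e^{-nrX}` of `Yⁿ` is an exponential tilt,
`E[Xⁿ e^{-nrX}] = Γ(k+n)/Γ(k) · θⁿ/(1+nrθ)^{k+n}`, and independence factors off `E[εⁿ]`.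
For `n = 1, 2` the equilibrium conditions thus become `e^r = (1+rθ)^{k+1}` and
`(1+v) e^{2r} = (1+2rθ)^{k+2}`, so the two terms of the claim are `2(1+rθ)` and `1+2rθ`. -/

lemma gammaMeasure_ae_nonneg (a l : ℝ) : ∀ᵐ x ∂gammaMeasure a l, 0 ≤ x := by
  simp only [ae_iff, not_le]
  exact (withDensity_apply _ measurableSet_Iio).trans (lintegral_gammaPDF_of_nonpos le_rfl)

lemma integral_gammaMeasure {a l : ℝ} (ha : 0 < a) (hl : 0 < l) (f : ℝ → ℝ) :
    ∫ x, f x ∂gammaMeasure a l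
      = ∫ x in Set.Ioi 0, l ^ a / Gamma a * x ^ (a - 1) * exp (-(l * x)) * f x := by
  have hpdf : Measurable (gammaPDF a l) := (measurable_gammaPDFReal a l).ennreal_ofReal
  rw [gammaMeasure,
    integral_withDensity_eq_integral_toReal_smul hpdf (ae_of_all _ fun _ => ENNReal.ofReal_lt_top),
    ← integral_Ici_eq_integral_Ioi]
  simp only [gammaPDF, ENNReal.toReal_ofReal (gammaPDFReal_nonneg ha hl _), smul_eq_mul]
  rw [← setIntegral_eq_integral_of_forall_compl_eq_zero (s := Set.Ici 0)]
  · refine setIntegral_congr_fun measurableSet_Ici fun x (hx : 0 ≤ x) => ?_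
    simp only [gammaPDFReal, if_pos hx]
  · intro x hx
    simp [gammaPDFReal, if_neg (show ¬ 0 ≤ x from hx)]

lemma integral_rpow_mul_exp_neg_mul_gammaMeasure {a l s p : ℝ} (ha : 0 < a) (hl : 0 < l)
    (hap : 0 < a + p) (hls : 0 < l + s) :
    ∫ x, x ^ p * exp (-(s * x)) ∂gammaMeasure a l
      = Gamma (a + p) / Gamma a * (l ^ a / (l + s) ^ (a + p)) := by
  rw [integral_gammaMeasure ha hl]
  have htilt : ∀ x ∈ Set.Ioi (0 : ℝ),
      l ^ a / Gamma a * x ^ (a - 1) * exp (-(l * x)) * (x ^ p * exp (-(s * x)))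
        = l ^ a / Gamma a * (x ^ (a + p - 1) * exp (-((l + s) * x))) := by
    intro x (hx : 0 < x)
    rw [show a + p - 1 = (a - 1) + p by ring, rpow_add hx,
      show -((l + s) * x) = -(l * x) + -(s * x) by ring, exp_add]
    ring
  rw [setIntegral_congr_fun measurableSet_Ioi htilt, integral_const_mul,
    integral_rpow_mul_exp_neg_mul_Ioi hap hls, div_rpow zero_le_one hls.le, one_rpow]
  field_simp

noncomputable def rickerMap (r x : ℝ) : ℝ := x * exp (r * (1 - x))

lemma continuous_rickerMap (r : ℝ) : Continuous (rickerMap r) := by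
  unfold rickerMap; fun_prop

lemma rickerMap_nonneg (r : ℝ) {x : ℝ} (hx : 0 ≤ x) : 0 ≤ rickerMap r x := by
  unfold rickerMap; positivity

lemma rickerMap_le {r : ℝ} (hr : 0 < r) (x : ℝ) : rickerMap r x ≤ exp (r - 1) / r := by
  rw [le_div_iff₀ hr, sub_eq_add_neg, exp_add]
  calc rickerMap r x * r = exp r * (r * x * exp (-(r * x))) := by
        rw [rickerMap, mul_sub, mul_one, sub_eq_add_neg, exp_add]; ring
    _ ≤ exp r * exp (-1) := by gcongr; exact mul_exp_neg_le_exp_neg_one _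

lemma integral_rickerMap_pow_gammaMeasure {k θ r : ℝ} (hk : 0 < k) (hθ : 0 < θ) (hr : 0 ≤ r)
    (n : ℕ) :
    ∫ x, rickerMap r x ^ n ∂gammaMeasure k θ⁻¹
      = exp (n * r) * (Gamma (k + n) / Gamma k) * (θ ^ n / (1 + n * r * θ) ^ (k + n)) := by
  have hpow : ∀ x, rickerMap r x ^ n = exp (n * r) * (x ^ (n : ℝ) * exp (-(n * r * x))) := by
    intro x
    rw [rickerMap, rpow_natCast, mul_pow, ← exp_nat_mul, mul_left_comm (exp _), ← exp_add]
    ring_nf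
  have hA : 0 < 1 + n * r * θ := by positivity
  have hrate : θ⁻¹ + n * r = (1 + n * r * θ) * θ⁻¹ := by field_simp
  simp_rw [hpow]
  rw [integral_const_mul, integral_rpow_mul_exp_neg_mul_gammaMeasure hk (inv_pos.mpr hθ)
      (by positivity) (by positivity), hrate, mul_rpow hA.le (inv_nonneg.mpr hθ.le),
    inv_rpow hθ.le, inv_rpow hθ.le, rpow_add hθ, rpow_natCast]
  field_simp

section RickerNoise

variable {Ω : Type*} {mΩ : MeasurableSpace Ω} {μ : Measure Ω} {X ε : Ω → ℝ} {k θ r : ℝ}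

lemma integral_mul_pow_of_indepFun {Z : Ω → ℝ} (hind : IndepFun Z ε μ)
    (hZ : AEStronglyMeasurable Z μ) (hε : AEStronglyMeasurable ε μ) (n : ℕ) :
    ∫ ω, (Z ω * ε ω) ^ n ∂μ = (∫ ω, Z ω ^ n ∂μ) * ∫ ω, ε ω ^ n ∂μ := by
  simp_rw [mul_pow]
  exact (hind.comp (measurable_id.pow_const n) (measurable_id.pow_const n))
    |>.integral_fun_mul_eq_mul_integral (hZ.pow n) (hε.pow n)

lemma integral_rickerMap_comp_mul_pow (hXm : Measurable X)
    (hX : μ.map X = gammaMeasure k θ⁻¹) (hε : AEStronglyMeasurable ε μ) (hind : IndepFun ε X μ)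
    (hk : 0 < k) (hθ : 0 < θ) (hr : 0 ≤ r) (n : ℕ) :
    ∫ ω, (rickerMap r (X ω) * ε ω) ^ n ∂μ
      = exp (n * r) * (Gamma (k + n) / Gamma k) * (θ ^ n / (1 + n * r * θ) ^ (k + n))
        * ∫ ω, ε ω ^ n ∂μ := by
  have hg : Measurable (rickerMap r) := (continuous_rickerMap r).measurable
  rw [integral_mul_pow_of_indepFun (Z := fun ω => rickerMap r (X ω)) (ε := ε)
      (hind.comp measurable_id hg).symm (hg.comp hXm).aestronglyMeasurable hε n,
    ← integral_rickerMap_pow_gammaMeasure hk hθ hr, ← hX,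
    integral_map hXm.aemeasurable (hg.pow_const n).aestronglyMeasurable]

lemma memLp_rickerMap_comp_mul (hXm : Measurable X) (hX : μ.map X = gammaMeasure k θ⁻¹)
    (hr : 0 < r) (hε : MemLp ε 2 μ) :
    MemLp (fun ω => rickerMap r (X ω) * ε ω) 2 μ := by
  have hXnonneg : ∀ᵐ ω ∂μ, 0 ≤ X ω :=
    ae_of_ae_map hXm.aemeasurable (hX ▸ gammaMeasure_ae_nonneg k θ⁻¹)
  have hbdd : ∀ᵐ ω ∂μ, ‖rickerMap r (X ω)‖ ≤ exp (r - 1) / r := by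
    filter_upwards [hXnonneg] with ω hω
    rw [norm_of_nonneg (rickerMap_nonneg r hω)]
    exact rickerMap_le hr _
  exact hε.mul' (memLp_top_of_bound
    ((continuous_rickerMap r).measurable.comp hXm).aestronglyMeasurable _ hbdd)

end RickerNoise

/-- Equilibrium growth rates of the stochastic Ricker equation:
Let `k, θ, r > 0`, `X ~ Gamma(k, θ)` (rate `1/θ`), `ε` square-integrable, independent of `X`,
with `E[ε] = 1` and `Var(ε) = v`, and set `Y = X · e^{r(1 − X)} · ε`. If `E[Y] = E[X] = kθ`
and `Var(Y) = Var(X) = kθ²`, then `2·e^{r/(k + 1)} − ((1 + v)·e^{2r})^{1/(k + 2)} = 1`. -/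
theorem stmt14 {Ω : Type*} {mΩ : MeasurableSpace Ω} (μ : Measure Ω) [IsProbabilityMeasure μ]
    (k θ r v : ℝ) (hk : 0 < k) (hθ : 0 < θ) (hr : 0 < r)
    (X ε : Ω → ℝ) (hXm : Measurable X)
    (hX : Measure.map X μ = gammaMeasure k θ⁻¹)
    (hε : MemLp ε 2 μ) (hindep : IndepFun ε X μ)
    (hεmean : ∫ ω, ε ω ∂μ = 1) (hεvar : variance ε μ = v)
    (Y : Ω → ℝ) (hY : Y = fun ω => X ω * Real.exp (r * (1 - X ω)) * ε ω)
    (hmean₁ : ∫ ω, Y ω ∂μ = ∫ ω, X ω ∂μ) (hmean₂ : ∫ ω, X ω ∂μ = k * θ)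
    (hvar₁ : variance Y μ = variance X μ) (hvar₂ : variance X μ = k * θ ^ 2) :
    2 * Real.exp (r / (k + 1)) - ((1 + v) * Real.exp (2 * r)) ^ (1 / (k + 2)) = 1 := by
  change Y = fun ω => rickerMap r (X ω) * ε ω at hY
  subst hY
  have hmoment := integral_rickerMap_comp_mul_pow hXm hX hε.aestronglyMeasurable hindep hk hθ hr.le
  have hΓ₁ : Gamma (k + 1) = k * Gamma k := Gamma_add_one hk.ne'
  have hΓ₂ : Gamma (k + 2) = (k + 1) * (k * Gamma k) := by
    rw [show k + 2 = k + 1 + 1 by ring, Gamma_add_one (by positivity), hΓ₁]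
  have hεsq : ∫ ω, ε ω ^ 2 ∂μ = 1 + v := by
    have := variance_eq_sub hε
    simp only [Pi.pow_apply, hεvar, hεmean] at this
    linarith
  have hYsq : ∫ ω, (rickerMap r (X ω) * ε ω) ^ 2 ∂μ = k * (k + 1) * θ ^ 2 := by
    have := variance_eq_sub (memLp_rickerMap_comp_mul hXm hX hr hε)
    simp only [Pi.pow_apply, hvar₁, hvar₂, hmean₁, hmean₂] at this
    linear_combination -this
  have hfirst : exp r = (1 + r * θ) ^ (k + 1) := by
    have h := hmoment 1
    simp only [pow_one, hmean₁, hmean₂, hεmean, Nat.cast_one, one_mul, hΓ₁] at h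
    field_simp at h
    convert h.symm using 2; ring
  have hsecond : (1 + v) * exp (2 * r) = (1 + 2 * r * θ) ^ (k + 2) := by
    have h := hmoment 2
    simp only [hYsq, hεsq, Nat.cast_ofNat, hΓ₂] at h
    field_simp at h
    rw [mul_comm]
    convert h.symm using 2; ring
  rw [div_eq_mul_inv, exp_mul, hfirst, rpow_rpow_inv (by positivity) (by positivity), hsecond,
    one_div, rpow_rpow_inv (by positivity) (by positivity)]
  ring
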